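/- arXiv:1302.2803 — 2 statements merged into one kernel-verified Lean document; each statement's English description precedes it below -/
import Mathlib

section
/- Let f(z) = ∑_{n=0}^∞ a_n z^n be a power series with complex coefficients convergent on the open disk D(0,R) ⊂ ℂ with R > 0, and let f_a(z) := ∑_{n=0}^∞ |a_n| z^n. Let A, B be commuting bounded linear operators on a complex Hilbert space H, and let p > 1, q > 1 with 1/p + 1/q = 1. If ‖A‖^p < R and ‖B‖^q < R, and if f_a(r(A)^{p−1} r(B)^{q−1}) ≠ 0, then r(f(AB)) ≤ f_a(r(A)^p) · f_a(r(B)^q) / f_a(r(A)^{p−1} r(B)^{q−1}). -/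
/-!
Work in the double commutant of `{A, B}`: it is a commutative Banach algebra, and since it is
inverse-closed, spectra computed in it are the spectra in `B(H)`. Every point of the spectrum
of `f(AB)` is therefore `χ (f(AB)) = ∑ aₙ (χ A · χ B)ⁿ` for a character `χ` with `|χ A| ≤ r(A)`
and `|χ B| ≤ r(B)`, so `r(f(AB)) ≤ f_a(xy)` with `x = r(A)`, `y = r(B)`. Hölder's inequality
with weights `|aₙ|` gives `f_a(xy) ≤ f_a(xᵖ)^{1/p} f_a(y^q)^{1/q}` and, for `x^{p-1}, y^{q-1}`
with the exponents swapped, `f_a(x^{p-1} y^{q-1}) ≤ f_a(xᵖ)^{1/q} f_a(y^q)^{1/p}`; multiplying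
the two bounds gives `f_a(xy) f_a(x^{p-1} y^{q-1}) ≤ f_a(xᵖ) f_a(y^q)`.
-/

open Filter Real
open scoped ENNReal

theorem summable_norm_mul_pow_of_lt {𝕜 : Type*} [RCLike 𝕜] {a : ℕ → 𝕜} {R t : ℝ}
    (hconv : ∀ z : 𝕜, ‖z‖ < R → Summable fun n => a n * z ^ n) (ht : 0 ≤ t) (htR : t < R) :
    Summable fun n => ‖a n‖ * t ^ n := by
  obtain ⟨r, htr, hrR⟩ := exists_between htR
  have hr : 0 < r := ht.trans_lt htr
  have hsum := hconv r (by rwa [RCLike.norm_ofReal, abs_of_pos hr])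
  obtain ⟨C, hC⟩ := hsum.tendsto_atTop_zero.norm.bddAbove_range
  have hgeom : Summable fun n => C * (t / r) ^ n :=
    (summable_geometric_of_lt_one (by positivity) ((div_lt_one hr).mpr htr)).mul_left C
  refine hgeom.of_nonneg_of_le (fun n => by positivity) fun n => ?_
  calc ‖a n‖ * t ^ n = ‖a n * (r : 𝕜) ^ n‖ * (t / r) ^ n := by
        rw [norm_mul, norm_pow, RCLike.norm_ofReal, abs_of_pos hr, div_pow, mul_assoc,
          mul_div_cancel₀ _ (by positivity)]
    _ ≤ C * (t / r) ^ n := by gcongr; exact hC ⟨n, rfl⟩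

theorem summable_norm_smul_pow_of_norm_le {𝕜 E : Type*} [NormedField 𝕜] [NormedRing E]
    [NormedAlgebra 𝕜 E] {c : ℕ → 𝕜} {a : E} {t : ℝ} (ha : ‖a‖ ≤ t)
    (hc : Summable fun n => ‖c n‖ * t ^ n) : Summable fun n => ‖c n • a ^ n‖ := by
  refine hc.of_norm_bounded_eventually_nat (eventually_atTop.2 ⟨1, fun n hn => ?_⟩)
  rw [norm_norm, norm_smul]
  gcongr
  exact (norm_pow_le' a hn).trans (pow_le_pow_left₀ (norm_nonneg a) ha n)

section Holder

variable {p q : ℝ} {c : ℕ → ℝ} {x y : ℝ}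

theorem summable_and_tsum_mul_mul_pow_le (hpq : p.HolderConjugate q) (hc : ∀ n, 0 ≤ c n)
    (hx : 0 ≤ x) (hy : 0 ≤ y) (hxs : Summable fun n => c n * (x ^ p) ^ n)
    (hys : Summable fun n => c n * (y ^ q) ^ n) :
    (Summable fun n => c n * (x * y) ^ n) ∧
      ∑' n, c n * (x * y) ^ n ≤
        (∑' n, c n * (x ^ p) ^ n) ^ (1 / p) * (∑' n, c n * (y ^ q) ^ n) ^ (1 / q) := by
  have hpow : ∀ {s z : ℝ}, s ≠ 0 → 0 ≤ z → ∀ n : ℕ,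
      (c n ^ (1 / s) * z ^ n) ^ s = c n * (z ^ s) ^ n := fun hs hz n => by
    rw [mul_rpow (by have := hc n; positivity) (by positivity), ← rpow_mul (hc n),
      one_div_mul_cancel hs, rpow_one, rpow_pow_comm hz]
  have hprod : ∀ n, c n ^ (1 / p) * x ^ n * (c n ^ (1 / q) * y ^ n) = c n * (x * y) ^ n :=
    fun n => by
      rw [mul_mul_mul_comm, ← rpow_add' (hc n) (by rw [hpq.one_div_add_one_div]; simp),
        hpq.one_div_add_one_div, div_one, rpow_one, mul_pow]
  have := Real.summable_and_inner_le_Lp_mul_Lq_tsum_of_nonneg hpq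
    (f := fun n => c n ^ (1 / p) * x ^ n) (g := fun n => c n ^ (1 / q) * y ^ n)
    (fun n => by have := hc n; positivity) (fun n => by have := hc n; positivity)
    (by simpa only [hpow hpq.ne_zero hx] using hxs)
    (by simpa only [hpow hpq.symm.ne_zero hy] using hys)
  simpa only [hprod, hpow hpq.ne_zero hx, hpow hpq.symm.ne_zero hy] using this

theorem tsum_mul_pow_mul_tsum_mul_pow_le (hpq : p.HolderConjugate q) (hc : ∀ n, 0 ≤ c n)
    (hx : 0 ≤ x) (hy : 0 ≤ y) (hxs : Summable fun n => c n * (x ^ p) ^ n)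
    (hys : Summable fun n => c n * (y ^ q) ^ n) :
    (∑' n, c n * (x * y) ^ n) * ∑' n, c n * (x ^ (p - 1) * y ^ (q - 1)) ^ n ≤
      (∑' n, c n * (x ^ p) ^ n) * ∑' n, c n * (y ^ q) ^ n := by
  have hx' : (x ^ (p - 1)) ^ q = x ^ p := by rw [← rpow_mul hx, hpq.sub_one_mul_conj]
  have hy' : (y ^ (q - 1)) ^ p = y ^ q := by rw [← rpow_mul hy, hpq.symm.sub_one_mul_conj]
  have h₁ := (summable_and_tsum_mul_mul_pow_le hpq hc hx hy hxs hys).2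
  have h₂ := (summable_and_tsum_mul_mul_pow_le hpq.symm hc (rpow_nonneg hx _)
    (rpow_nonneg hy _) (by rwa [hx']) (by rwa [hy'])).2
  rw [hx', hy'] at h₂
  set F := ∑' n, c n * (x ^ p) ^ n
  set G := ∑' n, c n * (y ^ q) ^ n
  have hF : 0 ≤ F := tsum_nonneg fun n => mul_nonneg (hc n) (by positivity)
  have hG : 0 ≤ G := tsum_nonneg fun n => mul_nonneg (hc n) (by positivity)
  calc _ ≤ (F ^ (1 / p) * G ^ (1 / q)) * (F ^ (1 / q) * G ^ (1 / p)) :=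
        mul_le_mul h₁ h₂ (tsum_nonneg fun n => mul_nonneg (hc n) (by positivity))
          (by positivity)
    _ = F * G := by
        rw [mul_mul_mul_comm, ← rpow_add' hF (by rw [hpq.one_div_add_one_div]; simp),
          ← rpow_add' hG (by rw [add_comm, hpq.one_div_add_one_div]; simp), add_comm (1 / q),
          hpq.one_div_add_one_div, div_one, rpow_one, rpow_one]

end Holder

namespace Subalgebra

variable {R A : Type*} [CommRing R] [Ring A] [Algebra R A]

theorem isUnit_coe_centralizer_iff {s : Set A} {x : centralizer R s} :
    IsUnit (x : A) ↔ IsUnit x := by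
  refine ⟨fun ⟨u, hu⟩ => ?_, fun h => h.map (centralizer R s).val⟩
  have hinv : (↑u⁻¹ : A) ∈ centralizer R s := fun g hg =>
    (Commute.units_inv_right (hu ▸ x.2 g hg : Commute g u)).eq
  exact ⟨⟨x, ⟨_, hinv⟩, Subtype.ext (by simp [← hu]), Subtype.ext (by simp [← hu])⟩, rfl⟩

theorem spectrum_centralizer_eq (s : Set A) (x : centralizer R s) :
    spectrum R x = spectrum R (x : A) := by
  ext k
  simp only [spectrum.mem_iff, ← isUnit_coe_centralizer_iff]
  rfl

end Subalgebra

namespace spectrum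

variable {𝕜 A : Type*} [NormedField 𝕜] [NormedRing A] [NormedAlgebra 𝕜 A]

theorem norm_le_toReal_spectralRadius [CompleteSpace A] {a : A} {k : 𝕜} (hk : k ∈ spectrum 𝕜 a) :
    ‖k‖ ≤ (spectralRadius 𝕜 a).toReal := by
  have hfin : spectralRadius 𝕜 a ≠ ⊤ := by
    refine ne_top_of_le_ne_top (ENNReal.coe_ne_top (r := ‖a‖₊ * ‖(1 : A)‖₊))
      (iSup₂_le fun k hk => ?_)
    exact_mod_cast norm_le_norm_mul_of_mem hk
  exact ENNReal.toReal_mono hfin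
    (le_iSup₂ (f := fun k (_ : k ∈ spectrum 𝕜 a) => (‖k‖₊ : ℝ≥0∞)) k hk)

theorem toReal_spectralRadius_le {a : A} {r : ℝ} (hr : 0 ≤ r)
    (h : ∀ k ∈ spectrum 𝕜 a, ‖k‖ ≤ r) : (spectralRadius 𝕜 a).toReal ≤ r :=
  ENNReal.toReal_le_of_le_ofReal hr <| iSup₂_le fun k hk => by
    rw [← ENNReal.ofReal_coe_nnreal, coe_nnnorm]
    exact ENNReal.ofReal_le_ofReal (h k hk)

theorem toReal_spectralRadius_le_norm [CompleteSpace A] (h1 : ‖(1 : A)‖ ≤ 1) (a : A) :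
    (spectralRadius 𝕜 a).toReal ≤ ‖a‖ :=
  toReal_spectralRadius_le (norm_nonneg a) fun _ hk =>
    (norm_le_norm_mul_of_mem hk).trans (mul_le_of_le_one_right (norm_nonneg a) h1)

end spectrum

section

variable {E : Type*} [NormedRing E] [NormedAlgebra ℂ E] [CompleteSpace E]

theorem norm_le_of_mem_spectrum_tsum_smul_mul_pow {a b : E} (hab : Commute a b) {c : ℕ → ℂ}
    (hconv : Summable fun n => ‖c n • (a * b) ^ n‖)
    (hc : Summable fun n =>
      ‖c n‖ * ((spectralRadius ℂ a).toReal * (spectralRadius ℂ b).toReal) ^ n)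
    {k : ℂ} (hk : k ∈ spectrum ℂ (∑' n, c n • (a * b) ^ n)) :
    ‖k‖ ≤ ∑' n, ‖c n‖ * ((spectralRadius ℂ a).toReal * (spectralRadius ℂ b).toReal) ^ n := by
  let S := Subalgebra.centralizer ℂ (Subalgebra.centralizer ℂ ({a, b} : Set E) : Set E)
  have hS : ∀ x ∈ S, ∀ y ∈ S, x * y = y * x := by
    refine Set.centralizer_centralizer_comm_of_comm ?_
    rintro x (rfl | rfl) y (rfl | rfl)
    exacts [rfl, hab.eq, hab.eq.symm, rfl]
  let _ : NormedCommRing S :=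
    { SubringClass.toNormedRing S with mul_comm := fun x y => Subtype.ext (hS x x.2 y y.2) }
  have : CompleteSpace S := (Set.isClosed_centralizer _).completeSpace_coe
  let a' : S := ⟨a, Set.subset_centralizer_centralizer (by simp)⟩
  let b' : S := ⟨b, Set.subset_centralizer_centralizer (by simp)⟩
  have hsum : Summable fun n => c n • (a' * b') ^ n := Summable.of_norm hconv
  have hcoe : ((∑' n, c n • (a' * b') ^ n : S) : E) = ∑' n, c n • (a * b) ^ n :=
    (hsum.hasSum.map S.val continuous_subtype_val).tsum_eq.symm
  rw [← hcoe, ← Subalgebra.spectrum_centralizer_eq,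
    WeakDual.CharacterSpace.mem_spectrum_iff_exists] at hk
  obtain ⟨φ, rfl⟩ := hk
  have hφ : ∀ x : S, ‖φ x‖ ≤ (spectralRadius ℂ (x : E)).toReal := fun x =>
    spectrum.norm_le_toReal_spectralRadius
      (Subalgebra.spectrum_centralizer_eq _ x ▸ WeakDual.CharacterSpace.apply_mem_spectrum φ x)
  rw [hsum.map_tsum φ (map_continuous φ)]
  refine tsum_of_norm_bounded hc.hasSum fun n => ?_
  rw [map_smul, map_pow, map_mul, norm_smul, norm_pow, norm_mul]
  gcongr
  exacts [hφ a', hφ b']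

end

theorem spectralRadius_powerSeries_mul_le_dragomir_sandor_general
    {H : Type*} [NormedAddCommGroup H] [InnerProductSpace ℂ H] [CompleteSpace H]
    (a : ℕ → ℂ) (R : ℝ)
    (hconv : ∀ z : ℂ, ‖z‖ < R → Summable fun n : ℕ => a n * z ^ n)
    (A B : H →L[ℂ] H) (hcomm : A * B = B * A)
    (p q : ℝ) (hp : 1 < p) (hpq : 1 / p + 1 / q = 1)
    (hA : ‖A‖ ^ p < R) (hB : ‖B‖ ^ q < R)
    (hne : (∑' n : ℕ, ‖a n‖ *
        ((spectralRadius ℂ A).toReal ^ (p - 1) *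
          (spectralRadius ℂ B).toReal ^ (q - 1)) ^ n) ≠ 0) :
    (spectralRadius ℂ (∑' n : ℕ, a n • (A * B) ^ n)).toReal ≤
      (∑' n : ℕ, ‖a n‖ * ((spectralRadius ℂ A).toReal ^ p) ^ n) *
        (∑' n : ℕ, ‖a n‖ * ((spectralRadius ℂ B).toReal ^ q) ^ n) /
          (∑' n : ℕ, ‖a n‖ *
            ((spectralRadius ℂ A).toReal ^ (p - 1) *
              (spectralRadius ℂ B).toReal ^ (q - 1)) ^ n) := by
  have hpq' : p.HolderConjugate q :=
    Real.holderConjugate_iff.mpr ⟨hp, by simpa only [one_div] using hpq⟩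
  have hc : ∀ n, 0 ≤ ‖a n‖ := fun n => norm_nonneg _
  set x := (spectralRadius ℂ A).toReal
  set y := (spectralRadius ℂ B).toReal
  have hxA : x ≤ ‖A‖ := spectrum.toReal_spectralRadius_le_norm ContinuousLinearMap.norm_id_le A
  have hyB : y ≤ ‖B‖ := spectrum.toReal_spectralRadius_le_norm ContinuousLinearMap.norm_id_le B
  have hx : 0 ≤ x := ENNReal.toReal_nonneg
  have hy : 0 ≤ y := ENNReal.toReal_nonneg
  have hxs := summable_norm_mul_pow_of_lt hconv (by positivity)
    ((rpow_le_rpow hx hxA hpq'.nonneg).trans_lt hA)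
  have hys := summable_norm_mul_pow_of_lt hconv (by positivity)
    ((rpow_le_rpow hy hyB hpq'.symm.nonneg).trans_lt hB)
  have hAB := (summable_and_tsum_mul_mul_pow_le hpq' hc (norm_nonneg A) (norm_nonneg B)
    (summable_norm_mul_pow_of_lt hconv (by positivity) hA)
    (summable_norm_mul_pow_of_lt hconv (by positivity) hB)).1
  have hspec : (spectralRadius ℂ (∑' n : ℕ, a n • (A * B) ^ n)).toReal ≤
      ∑' n, ‖a n‖ * (x * y) ^ n :=
    spectrum.toReal_spectralRadius_le (tsum_nonneg fun n => by positivity) fun _ =>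
      norm_le_of_mem_spectrum_tsum_smul_mul_pow hcomm
        (summable_norm_smul_pow_of_norm_le (norm_mul_le A B) hAB)
        (summable_and_tsum_mul_mul_pow_le hpq' hc hx hy hxs hys).1
  have hW : 0 < ∑' n, ‖a n‖ * (x ^ (p - 1) * y ^ (q - 1)) ^ n :=
    (tsum_nonneg fun n => by positivity).lt_of_ne' hne
  rw [le_div_iff₀ hW]
  exact (mul_le_mul_of_nonneg_right hspec hW.le).trans
    (tsum_mul_pow_mul_tsum_mul_pow_le hpq' hc hx hy hxs hys)

/-- For commuting `A`, `B` with `‖A‖^p < R`, `‖B‖^q < R` (conjugate exponents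
`p, q`), one has
`r(f(AB)) ≤ f_a(r(A)^p) · f_a(r(B)^q) / f_a(r(A)^{p-1} r(B)^{q-1})`. -/
theorem spectralRadius_powerSeries_mul_le_dragomir_sandor
    {H : Type*} [NormedAddCommGroup H] [InnerProductSpace ℂ H] [CompleteSpace H]
    (a : ℕ → ℂ) (R : ℝ) (hR : 0 < R)
    (hconv : ∀ z : ℂ, ‖z‖ < R → Summable fun n : ℕ => a n * z ^ n)
    (A B : H →L[ℂ] H) (hcomm : A * B = B * A)
    (p q : ℝ) (hp : 1 < p) (hq : 1 < q) (hpq : 1 / p + 1 / q = 1)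
    (hA : ‖A‖ ^ p < R) (hB : ‖B‖ ^ q < R)
    (hne : (∑' n : ℕ, ‖a n‖ *
        ((spectralRadius ℂ A).toReal ^ (p - 1) *
          (spectralRadius ℂ B).toReal ^ (q - 1)) ^ n) ≠ 0) :
    (spectralRadius ℂ (∑' n : ℕ, a n • (A * B) ^ n)).toReal ≤
      (∑' n : ℕ, ‖a n‖ * ((spectralRadius ℂ A).toReal ^ p) ^ n) *
        (∑' n : ℕ, ‖a n‖ * ((spectralRadius ℂ B).toReal ^ q) ^ n) /
          (∑' n : ℕ, ‖a n‖ *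
            ((spectralRadius ℂ A).toReal ^ (p - 1) *
              (spectralRadius ℂ B).toReal ^ (q - 1)) ^ n) :=
  spectralRadius_powerSeries_mul_le_dragomir_sandor_general a R hconv A B hcomm p q hp hpq hA hB hne
end

section
/- Let f(z) = ∑_{n=0}^∞ a_n z^n be a power series with complex coefficients convergent on the open disk D(0,R) ⊂ ℂ with R > 0, and let f_a(z) := ∑_{n=0}^∞ |a_n| z^n. Let A, B be commuting bounded linear operators on a complex Hilbert space H with ‖A‖² < R, ‖B‖² < R, ‖A‖ < R and ‖B‖ < R. Then r(f(AB)) ≤ (1/2) f_a(‖AB‖) + (1/2) min{ f_a(‖A‖^{1/2} ‖AB²‖^{1/2}), f_a(‖A²B‖^{1/2} ‖B‖^{1/2}) }. -/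
/-!
Put `T = AB`. Commutativity gives `T² = A (AB²) = (A²B) B`, so each of
`w = ‖AB‖, √‖A‖ √‖AB²‖, √‖A²B‖ √‖B‖` satisfies `‖T²‖ ≤ w²` and `w ≤ ‖A‖ ‖B‖ < R`; hence
`‖T^(n+1)‖ ≤ c wⁿ` for a constant `c`. Expanding `f(T)` term by term then gives
`‖f(T)^k T^(n+1)‖ ≤ c f_a(w)^k wⁿ`, and splitting off the constant term of `f(T)` yields
`‖f(T)^(k+1)‖ ≤ (k+1) M f_a(w)^k`. As `r(S)ⁿ ≤ ‖Sⁿ‖`, the linear factor `k+1` is lost in the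
limit and `r(f(T)) ≤ f_a(w)` for each of the three `w`; the claimed bound is an average of two
of these estimates.
-/

open Filter Topology

lemma summable_norm_mul_pow_of_summable {𝕜 : Type*} [RCLike 𝕜] {a : ℕ → 𝕜} {x : ℝ} (hx : 0 ≤ x)
    (h : Summable fun n => a n * (x : 𝕜) ^ n) : Summable fun n => ‖a n‖ * x ^ n := by
  simpa [abs_of_nonneg hx] using (summable_norm_iff (E := 𝕜)).mpr h

lemma summable_succ_mul_pow {f : ℕ → ℝ} {x : ℝ} (h : Summable fun n => f n * x ^ n) :
    Summable fun n => f (n + 1) * x ^ n := by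
  rcases eq_or_ne x 0 with rfl | hx
  · exact summable_of_ne_finset_zero (s := {0}) fun n hn => by simp_all
  · simpa [pow_succ, ← mul_assoc, hx] using ((summable_nat_add_iff 1).2 h).mul_right x⁻¹

section SpectralRadius

variable {𝕜 𝒜 : Type*} [NormedField 𝕜] [NormedRing 𝒜] [NormedAlgebra 𝕜 𝒜] [CompleteSpace 𝒜]
  [NormOneClass 𝒜]

variable (𝕜) in
lemma spectralRadius_toReal_pow_le_norm_pow (S : 𝒜) (n : ℕ) :
    (spectralRadius 𝕜 S).toReal ^ n ≤ ‖S ^ n‖ := by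
  have := NormOneClass.nontrivial (G := 𝒜)
  have h : spectralRadius 𝕜 S ^ n ≤ ‖S ^ n‖₊ :=
    (spectrum.spectralRadius_pow_le' S n).trans (spectrum.spectralRadius_le_nnnorm _)
  simpa using ENNReal.toReal_mono ENNReal.coe_ne_top h

lemma spectralRadius_toReal_le_of_norm_pow_succ_le {S : 𝒜} {F M : ℝ} (hF : 0 ≤ F)
    (h : ∀ n : ℕ, ‖S ^ (n + 1)‖ ≤ (n + 1) * M * F ^ n) :
    (spectralRadius 𝕜 S).toReal ≤ F := by
  set ρ := (spectralRadius 𝕜 S).toReal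
  by_contra! hFρ
  have hρ : 0 < ρ := hF.trans_lt hFρ
  have hq : F / ρ < 1 := (div_lt_one hρ).2 hFρ
  have hle : ∀ n : ℕ, ρ ≤ M * ((n + 1) * (F / ρ) ^ n) := fun n => by
    have hpow : ρ * ρ ^ n ≤ (n + 1) * M * F ^ n :=
      pow_succ' ρ n ▸ (spectralRadius_toReal_pow_le_norm_pow 𝕜 S (n + 1)).trans (h n)
    calc ρ = ρ * ρ ^ n / ρ ^ n := by field_simp
      _ ≤ (n + 1) * M * F ^ n / ρ ^ n := by gcongr
      _ = M * ((n + 1) * (F / ρ) ^ n) := by rw [div_pow]; ring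
  have hlim : Tendsto (fun n : ℕ => M * ((n + 1) * (F / ρ) ^ n)) atTop (𝓝 0) := by
    simpa [add_mul] using ((tendsto_self_mul_const_pow_of_lt_one (by positivity) hq).add
      (tendsto_pow_atTop_nhds_zero_of_lt_one (by positivity) hq)).const_mul M
  exact hρ.not_ge (ge_of_tendsto' hlim hle)

end SpectralRadius

section PowerSeries

/- The power bound `‖T^(n+1)‖ ≤ c * x ^ n` (rather than `‖T^n‖ ≤ C * x ^ n`) allows `x = 0` for a
nonzero nilpotent `T`. -/
variable {𝕜 𝒜 : Type*} [NormedField 𝕜] [NormedRing 𝒜] [NormedAlgebra 𝕜 𝒜] [CompleteSpace 𝒜]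
  {a : ℕ → 𝕜} {T : 𝒜} {x c : ℝ}

lemma summable_smul_pow (hsum : Summable fun n => ‖a n‖ * x ^ n)
    (hT : ∀ n, ‖T ^ (n + 1)‖ ≤ c * x ^ n) : Summable fun n => a n • T ^ n := by
  refine (summable_nat_add_iff 1).1 (Summable.of_norm_bounded
    ((summable_succ_mul_pow hsum).mul_left c) fun n => ?_)
  rw [norm_smul, mul_left_comm]
  exact mul_le_mul_of_nonneg_left (hT n) (norm_nonneg _)

lemma norm_mul_tsum_smul_pow_mul_pow_succ_le (hsum : Summable fun n => ‖a n‖ * x ^ n)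
    (hT : ∀ n, ‖T ^ (n + 1)‖ ≤ c * x ^ n) {Y : 𝒜} {K : ℝ}
    (hY : ∀ n, ‖Y * T ^ (n + 1)‖ ≤ K * x ^ n) (n : ℕ) :
    ‖Y * (∑' m, a m • T ^ m) * T ^ (n + 1)‖ ≤ K * (∑' m, ‖a m‖ * x ^ m) * x ^ n := by
  have hS := summable_smul_pow hsum hT
  have hexpand : Y * (∑' m, a m • T ^ m) * T ^ (n + 1) = ∑' m, a m • (Y * T ^ (m + n + 1)) := by
    rw [← hS.tsum_mul_left, ← (hS.mul_left Y).tsum_mul_right]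
    congr 1 with m
    rw [mul_smul_comm, smul_mul_assoc, mul_assoc, ← pow_add, add_assoc]
  rw [hexpand, mul_right_comm]
  refine tsum_of_norm_bounded (hsum.hasSum.mul_left (K * x ^ n)) fun m => ?_
  calc ‖a m • (Y * T ^ (m + n + 1))‖ = ‖a m‖ * ‖Y * T ^ (m + n + 1)‖ := norm_smul _ _
    _ ≤ ‖a m‖ * (K * x ^ (m + n)) := mul_le_mul_of_nonneg_left (hY _) (norm_nonneg _)
    _ = K * x ^ n * (‖a m‖ * x ^ m) := by ring

lemma norm_tsum_smul_pow_pow_mul_pow_succ_le (hsum : Summable fun n => ‖a n‖ * x ^ n)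
    (hT : ∀ n, ‖T ^ (n + 1)‖ ≤ c * x ^ n) (k n : ℕ) :
    ‖(∑' m, a m • T ^ m) ^ k * T ^ (n + 1)‖ ≤ c * (∑' m, ‖a m‖ * x ^ m) ^ k * x ^ n := by
  induction k generalizing n with
  | zero => simpa using hT n
  | succ k ih =>
    rw [pow_succ _ k, pow_succ _ k, ← mul_assoc c]
    exact norm_mul_tsum_smul_pow_mul_pow_succ_le hsum hT ih n

lemma norm_tsum_smul_pow_pow_succ_le_norm_mul_add (hsum : Summable fun n => ‖a n‖ * x ^ n)
    (hT : ∀ n, ‖T ^ (n + 1)‖ ≤ c * x ^ n) (k : ℕ) :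
    ‖(∑' m, a m • T ^ m) ^ (k + 1)‖ ≤ ‖a 0‖ * ‖(∑' m, a m • T ^ m) ^ k‖ +
      c * (∑' m, ‖a (m + 1)‖ * x ^ m) * (∑' m, ‖a m‖ * x ^ m) ^ k := by
  have hS := summable_smul_pow hsum hT
  rw [pow_succ, ← hS.tsum_mul_left, (hS.mul_left _).tsum_eq_zero_add, pow_zero, mul_smul_comm,
    mul_one]
  have hG := (summable_succ_mul_pow hsum).hasSum.mul_left (c * (∑' m, ‖a m‖ * x ^ m) ^ k)
  refine (norm_add_le_of_le (norm_smul _ _).le (tsum_of_norm_bounded hG fun m => ?_)).trans_eq ?_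
  · rw [mul_smul_comm, norm_smul, mul_left_comm]
    exact mul_le_mul_of_nonneg_left (norm_tsum_smul_pow_pow_mul_pow_succ_le hsum hT k m)
      (norm_nonneg _)
  · ring

lemma norm_tsum_smul_pow_pow_succ_le [NormOneClass 𝒜] (hx : 0 ≤ x)
    (hsum : Summable fun n => ‖a n‖ * x ^ n) (hT : ∀ n, ‖T ^ (n + 1)‖ ≤ c * x ^ n) (k : ℕ) :
    ‖(∑' m, a m • T ^ m) ^ (k + 1)‖ ≤ (k + 1) *
      ((∑' m, ‖a m‖ * x ^ m) + c * ∑' m, ‖a (m + 1)‖ * x ^ m) * (∑' m, ‖a m‖ * x ^ m) ^ k := by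
  have hstep := norm_tsum_smul_pow_pow_succ_le_norm_mul_add hsum hT
  set F := ∑' m, ‖a m‖ * x ^ m
  set E := c * ∑' m, ‖a (m + 1)‖ * x ^ m
  have hF : 0 ≤ F := tsum_nonneg fun n => by positivity
  have ha₀ : ‖a 0‖ ≤ F := by simpa using hsum.le_tsum 0 fun n _ => by positivity
  induction k with
  | zero => exact (hstep 0).trans (by simp [ha₀])
  | succ k ih =>
    calc ‖(∑' m, a m • T ^ m) ^ (k + 1 + 1)‖
        ≤ F * ((k + 1) * (F + E) * F ^ k) + E * F ^ (k + 1) :=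
          (hstep _).trans (by gcongr)
      _ = (↑(k + 1) + 1) * (F + E) * F ^ (k + 1) - F ^ (k + 2) := by push_cast; ring
      _ ≤ (↑(k + 1) + 1) * (F + E) * F ^ (k + 1) := sub_le_self _ (by positivity)

theorem spectralRadius_tsum_smul_pow_le [NormOneClass 𝒜] (hx : 0 ≤ x)
    (hsum : Summable fun n => ‖a n‖ * x ^ n) (hT : ∀ n, ‖T ^ (n + 1)‖ ≤ c * x ^ n) :
    (spectralRadius 𝕜 (∑' n, a n • T ^ n)).toReal ≤ ∑' n, ‖a n‖ * x ^ n :=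
  spectralRadius_toReal_le_of_norm_pow_succ_le (tsum_nonneg fun n => by positivity)
    (norm_tsum_smul_pow_pow_succ_le hx hsum hT)

end PowerSeries

lemma norm_pow_succ_le_of_norm_sq_le {𝒜 : Type*} [SeminormedRing 𝒜] {T : 𝒜} {w : ℝ}
    (hw : 0 ≤ w) (hT : ‖T ^ 2‖ ≤ w ^ 2) (n : ℕ) : ‖T ^ (n + 1)‖ ≤ max ‖T‖ w * w ^ n := by
  induction n using Nat.twoStepInduction with
  | zero => simp
  | one => nlinarith [le_max_right ‖T‖ w]
  | more n _ ih =>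
    calc ‖T ^ (n + 2 + 1)‖ = ‖T ^ 2 * T ^ (n + 1)‖ := by rw [← pow_add]; ring_nf
      _ ≤ w ^ 2 * (max ‖T‖ w * w ^ n) := (norm_mul_le _ _).trans (by gcongr)
      _ = max ‖T‖ w * w ^ (n + 2) := by ring

lemma spectralRadius_tsum_smul_pow_le_of_sq_eq_mul {𝕜 𝒜 : Type*} [RCLike 𝕜] [NormedRing 𝒜]
    [NormedAlgebra 𝕜 𝒜] [CompleteSpace 𝒜] [NormOneClass 𝒜] {a : ℕ → 𝕜} {R : ℝ}
    (hconv : ∀ z : 𝕜, ‖z‖ < R → Summable fun n : ℕ => a n * z ^ n) {T P Q : 𝒜}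
    (hT : T ^ 2 = P * Q) (hPQ : √‖P‖ * √‖Q‖ < R) :
    (spectralRadius 𝕜 (∑' n, a n • T ^ n)).toReal ≤ ∑' n, ‖a n‖ * (√‖P‖ * √‖Q‖) ^ n := by
  have hw : 0 ≤ √‖P‖ * √‖Q‖ := by positivity
  have hsq : ‖T ^ 2‖ ≤ (√‖P‖ * √‖Q‖) ^ 2 := by
    rw [hT, mul_pow, Real.sq_sqrt (norm_nonneg _), Real.sq_sqrt (norm_nonneg _)]
    exact norm_mul_le _ _
  refine spectralRadius_tsum_smul_pow_le hw (summable_norm_mul_pow_of_summable hw (hconv _ ?_))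
    (norm_pow_succ_le_of_norm_sq_le hw hsq)
  rwa [RCLike.norm_ofReal, abs_of_nonneg hw]

theorem spectralRadius_powerSeries_mul_le_min_general
    {H : Type*} [NormedAddCommGroup H] [InnerProductSpace ℂ H] [CompleteSpace H]
    (a : ℕ → ℂ) (R : ℝ)
    (hconv : ∀ z : ℂ, ‖z‖ < R → Summable fun n : ℕ => a n * z ^ n)
    (A B : H →L[ℂ] H) (hcomm : A * B = B * A)
    (hA2 : ‖A‖ ^ 2 < R) (hB2 : ‖B‖ ^ 2 < R) :
    (spectralRadius ℂ (∑' n : ℕ, a n • (A * B) ^ n)).toReal ≤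
      (1 / 2) * (∑' n : ℕ, ‖a n‖ * ‖A * B‖ ^ n) +
        (1 / 2) * min
          (∑' n : ℕ, ‖a n‖ * (Real.sqrt ‖A‖ * Real.sqrt ‖A * B ^ 2‖) ^ n)
          (∑' n : ℕ, ‖a n‖ * (Real.sqrt ‖A ^ 2 * B‖ * Real.sqrt ‖B‖) ^ n) := by
  -- `‖(1 : H →L[ℂ] H)‖ = 1` needs `H` nontrivial.
  rcases subsingleton_or_nontrivial H with hH | hH
  · rw [spectrum.SpectralRadius.of_subsingleton, ENNReal.toReal_zero]
    positivity
  have hlt (P Q : H →L[ℂ] H) (hPQ : ‖P‖ * ‖Q‖ ≤ (‖A‖ * ‖B‖) ^ 2) : √‖P‖ * √‖Q‖ < R := by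
    rw [← Real.sqrt_mul (norm_nonneg _)]
    refine (Real.sqrt_le_iff.mpr ⟨by positivity, hPQ⟩).trans_lt ?_
    nlinarith [sq_nonneg (‖A‖ - ‖B‖)]
  have hsq : (A * B) ^ 2 = A * (A * B ^ 2) := by
    rw [sq, sq, mul_assoc, ← mul_assoc B, ← hcomm, mul_assoc A B B]
  have hsq' : (A * B) ^ 2 = A ^ 2 * B * B := by
    rw [hsq, sq, sq]
    simp only [mul_assoc]
  have hAB_AB := spectralRadius_tsum_smul_pow_le_of_sq_eq_mul hconv (sq (A * B))
    (hlt _ _ (by rw [← sq]; gcongr; exact norm_mul_le _ _))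
  rw [Real.mul_self_sqrt (norm_nonneg _)] at hAB_AB
  have hA_AB2 := spectralRadius_tsum_smul_pow_le_of_sq_eq_mul hconv hsq <| hlt _ _ <|
    calc ‖A‖ * ‖A * B ^ 2‖ ≤ ‖A‖ * (‖A‖ * ‖B‖ ^ 2) := by
          gcongr; exact norm_mul_le_of_le le_rfl (norm_pow_le' B two_pos)
      _ = (‖A‖ * ‖B‖) ^ 2 := by ring
  have hA2B_B := spectralRadius_tsum_smul_pow_le_of_sq_eq_mul hconv hsq' <| hlt _ _ <|
    calc ‖A ^ 2 * B‖ * ‖B‖ ≤ ‖A‖ ^ 2 * ‖B‖ * ‖B‖ := by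
          gcongr; exact norm_mul_le_of_le (norm_pow_le' A two_pos) le_rfl
      _ = (‖A‖ * ‖B‖) ^ 2 := by ring
  linarith [le_min hA_AB2 hA2B_B]

/-- For commuting `A`, `B` with `‖A‖², ‖B‖², ‖A‖, ‖B‖ < R`, one has
`r(f(AB)) ≤ (1/2) f_a(‖AB‖)
  + (1/2) min { f_a(‖A‖^{1/2} ‖AB²‖^{1/2}), f_a(‖A²B‖^{1/2} ‖B‖^{1/2}) }`. -/
theorem spectralRadius_powerSeries_mul_le_min
    {H : Type*} [NormedAddCommGroup H] [InnerProductSpace ℂ H] [CompleteSpace H]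
    (a : ℕ → ℂ) (R : ℝ) (hR : 0 < R)
    (hconv : ∀ z : ℂ, ‖z‖ < R → Summable fun n : ℕ => a n * z ^ n)
    (A B : H →L[ℂ] H) (hcomm : A * B = B * A)
    (hA2 : ‖A‖ ^ 2 < R) (hB2 : ‖B‖ ^ 2 < R) (hA : ‖A‖ < R) (hB : ‖B‖ < R) :
    (spectralRadius ℂ (∑' n : ℕ, a n • (A * B) ^ n)).toReal ≤
      (1 / 2) * (∑' n : ℕ, ‖a n‖ * ‖A * B‖ ^ n) +
        (1 / 2) * min
          (∑' n : ℕ, ‖a n‖ * (Real.sqrt ‖A‖ * Real.sqrt ‖A * B ^ 2‖) ^ n)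
          (∑' n : ℕ, ‖a n‖ * (Real.sqrt ‖A ^ 2 * B‖ * Real.sqrt ‖B‖) ^ n) :=
  spectralRadius_powerSeries_mul_le_min_general a R hconv A B hcomm hA2 hB2
end
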